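/- arXiv:2503.19789 — 2 statements merged into one kernel-verified Lean document; each statement's English description precedes it below -/
import Mathlib

section
/- Let ξ_1, …, ξ_n be independent φ-sub-Gaussian random variables on a probability space (Ω,F,P), and suppose that for some s ∈ (0,2] the function x ↦ φ(|x|^{1/s}) is convex on ℝ. Then τ_φ^s(ξ_1 + ⋯ + ξ_n) ≤ Σ_{k=1}^n τ_φ^s(ξ_k). -/
open MeasureTheory Filter Set ProbabilityTheory

noncomputable section

/-- A random variable `ξ` is `φ`-sub-Gaussian w.r.t. the probability measure `μ`:
it is centered and `E exp (λ ξ) ≤ exp (φ (a λ))` for some `a ≥ 0` and all `λ`. -/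
def IsSubGaussian {Ω : Type*} [MeasurableSpace Ω] (μ : Measure Ω) (φ : ℝ → ℝ)
    (ξ : Ω → ℝ) : Prop :=
  (∫ ω, ξ ω ∂μ) = 0 ∧
    ∃ a : ℝ, 0 ≤ a ∧ ∀ l : ℝ, (∫ ω, Real.exp (l * ξ ω) ∂μ) ≤ Real.exp (φ (a * l))

/-- The `φ`-sub-Gaussian standard `τ_φ(ξ)`. -/
noncomputable def tauPhi {Ω : Type*} [MeasurableSpace Ω] (μ : Measure Ω) (φ : ℝ → ℝ)
    (ξ : Ω → ℝ) : ℝ :=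
  sInf {a : ℝ | 0 ≤ a ∧ ∀ l : ℝ, (∫ ω, Real.exp (l * ξ ω) ∂μ) ≤ Real.exp (φ (a * l))}

/-- Metric massiveness: the minimal number of closed balls of radius `u` covering `B`. -/
noncomputable def massiveness (B : Type*) [PseudoMetricSpace B] (u : ℝ) : ℕ :=
  sInf {n : ℕ | ∃ s : Finset B, s.card = n ∧ ∀ x : B, ∃ c ∈ s, dist x c ≤ u}

/-- A stochastic process `X` is separable on the (pseudo)metric space `B`. -/
def SeparableProcess {Ω : Type*} [MeasurableSpace Ω] {B : Type*} [PseudoMetricSpace B]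
    (μ : Measure Ω) (X : B → Ω → ℝ) : Prop :=
  ∃ D : Set B, D.Countable ∧ Dense D ∧
    ∀ᵐ ω ∂μ, ∀ t : B, ∀ ε > 0,
      X t ω ∈ closure ((fun s => X s ω) '' (D ∩ Metric.ball t ε))

/-- `φ` is an Orlicz N-function satisfying condition Q. -/
structure IsNFunctionQ (φ : ℝ → ℝ) : Prop where
  even : ∀ x, φ (-x) = φ x
  convex : ConvexOn ℝ Set.univ φ
  continuous : Continuous φ
  map_zero : φ 0 = 0
  pos : ∀ x ≠ 0, 0 < φ x
  small : Tendsto (fun x => φ x / x) (nhdsWithin 0 {0}ᶜ) (nhds 0)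
  large : Tendsto (fun x => φ x / x) atTop atTop
  condQ : (∃ c : ℝ, 0 < c ∧ Tendsto (fun x => φ x / x ^ 2) (nhdsWithin 0 {0}ᶜ) (nhds c)) ∨
    Tendsto (fun x => φ x / x ^ 2) (nhdsWithin 0 {0}ᶜ) atTop

section Aux

lemma super_add {ψ : ℝ → ℝ} (hψ : ConvexOn ℝ Set.univ ψ) (h0 : ψ 0 = 0)
    {x y : ℝ} (hx : 0 ≤ x) (hy : 0 ≤ y) : ψ x + ψ y ≤ ψ (x + y) := by
  rcases eq_or_lt_of_le (add_nonneg hx hy) with h | h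
  · have hx0 : x = 0 := by linarith
    have hy0 : y = 0 := by linarith
    simp [hx0, hy0, h0]
  · set T := x + y with hT
    have key : ∀ z w : ℝ, 0 ≤ z → 0 ≤ w → z + w = T → ψ z ≤ (z / T) * ψ T := by
      intro z w hz hw hzw
      have h2 := hψ.2 (Set.mem_univ T) (Set.mem_univ (0:ℝ))
        (div_nonneg hz h.le) (div_nonneg hw h.le)
        (by field_simp [h.ne']; linarith)
      simp only [smul_eq_mul, h0, mul_zero, add_zero] at h2
      rwa [div_mul_cancel₀ _ h.ne'] at h2
    have hx' := key x y hx hy rfl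
    have hy' := key y x hy hx (by rw [add_comm])
    have hsum : x / T + y / T = 1 := by field_simp; exact hT.symm
    calc ψ x + ψ y ≤ (x / T) * ψ T + (y / T) * ψ T := add_le_add hx' hy'
      _ = (x / T + y / T) * ψ T := by ring
      _ = ψ T := by rw [hsum, one_mul]

lemma super_sum {ψ : ℝ → ℝ} (hψ : ConvexOn ℝ Set.univ ψ) (h0 : ψ 0 = 0)
    {ι : Type*} (S : Finset ι) (t : ι → ℝ) (ht : ∀ i ∈ S, 0 ≤ t i) :
    ∑ i ∈ S, ψ (t i) ≤ ψ (∑ i ∈ S, t i) := by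
  classical
  induction S using Finset.induction with
  | empty => simp [h0]
  | insert a S' hi ih =>
    rw [Finset.sum_insert hi, Finset.sum_insert hi]
    calc ψ (t a) + ∑ i ∈ S', ψ (t i)
        ≤ ψ (t a) + ψ (∑ i ∈ S', t i) :=
          add_le_add_right (ih fun i hi' => ht i (Finset.mem_insert_of_mem hi')) _
      _ ≤ ψ (t a + ∑ i ∈ S', t i) :=
          super_add hψ h0 (ht a (Finset.mem_insert_self a S'))
            (Finset.sum_nonneg fun i hi' => ht i (Finset.mem_insert_of_mem hi'))

end Aux

/-- Theorem 1: for independent `φ`-sub-Gaussian random variables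
`ξ 1, …, ξ n`, if `x ↦ φ (|x| ^ (1/s))` is convex for some `s ∈ (0, 2]`, then
`τ_φ (ξ 1 + ⋯ + ξ n) ^ s ≤ ∑ k, τ_φ (ξ k) ^ s`. -/
theorem tauPhi_sum_pow_le {Ω : Type*} [MeasurableSpace Ω] (μ : Measure Ω)
    [IsProbabilityMeasure μ] (φ : ℝ → ℝ) (hφ : IsNFunctionQ φ)
    (s : ℝ) (hs : s ∈ Set.Ioc (0 : ℝ) 2)
    (hconv : ConvexOn ℝ Set.univ (fun x : ℝ => φ (|x| ^ (1 / s))))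
    (n : ℕ) (ξ : Fin n → Ω → ℝ) (hmeas : ∀ k, Measurable (ξ k))
    (hindep : iIndepFun ξ μ)
    (hsub : ∀ k, IsSubGaussian μ φ (ξ k)) :
    tauPhi μ φ (fun ω => ∑ k, ξ k ω) ^ s ≤ ∑ k, tauPhi μ φ (ξ k) ^ s := by
  obtain ⟨hs0, hs2⟩ := hs
  have hs_ne : s ≠ 0 := ne_of_gt hs0
  set ψ : ℝ → ℝ := fun x : ℝ => φ (|x| ^ (1 / s)) with hψdef
  have hψ0 : ψ 0 = 0 := by
    simp only [hψdef, abs_zero]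
    rw [Real.zero_rpow (by positivity : (1:ℝ)/s ≠ 0), hφ.map_zero]
  have hφabs : ∀ x : ℝ, φ |x| = φ x := by
    intro x
    rcases le_or_gt 0 x with h | h
    · rw [abs_of_nonneg h]
    · rw [abs_of_neg h, hφ.even]
  have key : ∀ a : Fin n → ℝ, (∀ k, 0 ≤ a k) →
      (∀ k, ∀ l : ℝ, (∫ ω, Real.exp (l * ξ k ω) ∂μ) ≤ Real.exp (φ (a k * l))) →
      ∀ l : ℝ, (∫ ω, Real.exp (l * ∑ k, ξ k ω) ∂μ)
        ≤ Real.exp (φ ((∑ k, a k ^ s) ^ (1/s) * l)) := by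
    intro a ha hb l
    set A : ℝ := (∑ k, a k ^ s) ^ (1/s) with hA
    have hB0 : 0 ≤ ∑ k, a k ^ s := Finset.sum_nonneg fun k _ => Real.rpow_nonneg (ha k) s
    have hA0 : 0 ≤ A := Real.rpow_nonneg hB0 _
    have h1 : (∫ ω, Real.exp (l * ∑ k, ξ k ω) ∂μ) = ∏ k, ProbabilityTheory.mgf (ξ k) μ l := by
      rw [← ProbabilityTheory.iIndepFun.mgf_sum hindep hmeas Finset.univ]
      simp [ProbabilityTheory.mgf, Finset.sum_apply]
    have h2 : (∏ k, ProbabilityTheory.mgf (ξ k) μ l) ≤ ∏ k, Real.exp (φ (a k * l)) :=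
      Finset.prod_le_prod (fun k _ => ProbabilityTheory.mgf_nonneg) (fun k _ => hb k l)
    have h3 : (∏ k : Fin n, Real.exp (φ (a k * l))) = Real.exp (∑ k, φ (a k * l)) :=
      (Real.exp_sum _ _).symm
    have hstep : ∀ k : Fin n, φ (a k * l) = ψ ((a k * |l|) ^ s) := by
      intro k
      have hml : 0 ≤ a k * |l| := mul_nonneg (ha k) (abs_nonneg l)
      have h5 : |(a k * |l|) ^ s| ^ (1/s) = a k * |l| := by
        rw [abs_of_nonneg (Real.rpow_nonneg hml s), ← Real.rpow_mul hml,
          mul_one_div_cancel hs_ne, Real.rpow_one]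
      rw [hψdef]
      simp only
      rw [h5, show a k * |l| = |a k * l| by rw [abs_mul, abs_of_nonneg (ha k)], hφabs]
    have hsum_eq : (∑ k, (a k * |l|) ^ s) = (∑ k, a k ^ s) * |l| ^ s := by
      rw [Finset.sum_mul]
      exact Finset.sum_congr rfl fun k _ => Real.mul_rpow (ha k) (abs_nonneg l)
    have hfinal : ψ ((∑ k, a k ^ s) * |l| ^ s) = φ (A * l) := by
      have hnn : 0 ≤ (∑ k, a k ^ s) * |l| ^ s :=
        mul_nonneg hB0 (Real.rpow_nonneg (abs_nonneg l) s)
      rw [hψdef]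
      simp only
      rw [abs_of_nonneg hnn, Real.mul_rpow hB0 (Real.rpow_nonneg (abs_nonneg l) s),
        ← Real.rpow_mul (abs_nonneg l), mul_one_div_cancel hs_ne, Real.rpow_one, ← hA,
        show A * |l| = |A * l| by rw [abs_mul, abs_of_nonneg hA0], hφabs]
    have h4 : (∑ k, φ (a k * l)) ≤ φ (A * l) := by
      calc (∑ k, φ (a k * l)) = ∑ k, ψ ((a k * |l|) ^ s) :=
            Finset.sum_congr rfl fun k _ => hstep k
        _ ≤ ψ (∑ k, (a k * |l|) ^ s) :=
            super_sum hconv hψ0 _ _ (fun k _ =>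
              Real.rpow_nonneg (mul_nonneg (ha k) (abs_nonneg l)) s)
        _ = φ (A * l) := by rw [hsum_eq, hfinal]
    calc (∫ ω, Real.exp (l * ∑ k, ξ k ω) ∂μ) = ∏ k, ProbabilityTheory.mgf (ξ k) μ l := h1
      _ ≤ ∏ k, Real.exp (φ (a k * l)) := h2
      _ = Real.exp (∑ k, φ (a k * l)) := h3
      _ ≤ Real.exp (φ (A * l)) := Real.exp_le_exp.mpr h4
  have hτ0 : 0 ≤ tauPhi μ φ (fun ω => ∑ k, ξ k ω) :=
    Real.sInf_nonneg fun x hx => hx.1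
  have hTprop : ∀ k : Fin n, ∀ ε : ℝ, 0 < ε → ∃ a : ℝ, (0 ≤ a ∧ ∀ l : ℝ,
      (∫ ω, Real.exp (l * ξ k ω) ∂μ) ≤ Real.exp (φ (a * l))) ∧ a < tauPhi μ φ (ξ k) + ε := by
    intro k ε hε
    obtain ⟨-, a0, ha0, hb0⟩ := hsub k
    have hne : Set.Nonempty {a : ℝ | 0 ≤ a ∧ ∀ l : ℝ,
        (∫ ω, Real.exp (l * ξ k ω) ∂μ) ≤ Real.exp (φ (a * l))} := ⟨a0, ha0, hb0⟩
    obtain ⟨a, ha, hlt⟩ := exists_lt_of_csInf_lt hne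
      (show sInf _ < tauPhi μ φ (ξ k) + ε from lt_add_of_pos_right _ hε)
    exact ⟨a, ha, hlt⟩
  have main : ∀ ε : ℝ, 0 < ε → tauPhi μ φ (fun ω => ∑ k, ξ k ω) ^ s
      ≤ ∑ k, (tauPhi μ φ (ξ k) + ε) ^ s := by
    intro ε hε
    choose a haprop halt using fun k => hTprop k ε hε
    have ha0 : ∀ k, 0 ≤ a k := fun k => (haprop k).1
    have hB0 : 0 ≤ ∑ k, a k ^ s := Finset.sum_nonneg fun k _ => Real.rpow_nonneg (ha0 k) s
    have h6 : tauPhi μ φ (fun ω => ∑ k, ξ k ω) ≤ (∑ k, a k ^ s) ^ (1/s) := by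
      apply csInf_le ⟨0, fun x hx => hx.1⟩
      exact ⟨Real.rpow_nonneg hB0 _, key a ha0 (fun k => (haprop k).2)⟩
    have h7 : tauPhi μ φ (fun ω => ∑ k, ξ k ω) ^ s ≤ ((∑ k, a k ^ s) ^ (1/s)) ^ s :=
      Real.rpow_le_rpow hτ0 h6 (le_of_lt hs0)
    have h8 : ((∑ k, a k ^ s) ^ (1/s)) ^ s = ∑ k, a k ^ s := by
      rw [← Real.rpow_mul hB0, one_div_mul_cancel hs_ne, Real.rpow_one]
    calc tauPhi μ φ (fun ω => ∑ k, ξ k ω) ^ s ≤ ∑ k, a k ^ s := h7.trans_eq h8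
      _ ≤ ∑ k, (tauPhi μ φ (ξ k) + ε) ^ s :=
        Finset.sum_le_sum fun k _ => Real.rpow_le_rpow (ha0 k) (le_of_lt (halt k)) (le_of_lt hs0)
  have hc : Continuous (fun ε : ℝ => ∑ k : Fin n, (tauPhi μ φ (ξ k) + ε) ^ s) :=
    continuous_finset_sum _ fun k _ =>
      (Real.continuous_rpow_const (le_of_lt hs0)).comp (continuous_const.add continuous_id)
  have htend : Tendsto (fun ε : ℝ => ∑ k : Fin n, (tauPhi μ φ (ξ k) + ε) ^ s)
      (nhdsWithin 0 (Set.Ioi 0)) (nhds (∑ k, tauPhi μ φ (ξ k) ^ s)) := by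
    have h2 : Tendsto (fun ε : ℝ => ∑ k : Fin n, (tauPhi μ φ (ξ k) + ε) ^ s)
        (nhdsWithin (0:ℝ) (Set.Ioi 0)) (nhds (∑ k : Fin n, (tauPhi μ φ (ξ k) + 0) ^ s)) :=
      (hc.tendsto 0).mono_left nhdsWithin_le_nhds
    simpa using h2
  exact ge_of_tendsto htend (eventually_mem_nhdsWithin.mono fun ε hε => main ε hε)
end
end

section
/- Let C > 0, T > 0, α ∈ (0,1), p ∈ (0,1), set σ(h) = C h^α (so σ^{(−1)}(u) = (u/C)^{1/α}) and β = C(T/2)^α. Then for every α̃ with 0 < α̃ < α: ( (1/(βp)) ∫_0^{βp} ( T / σ^{(−1)}(u) )^{α̃} du )^{1/α̃} ≤ T C^{1/α} / ( (βp)^{1/α} (1 − α̃/α)^{1/α̃} ), and as α̃ → 0+ the right-hand side converges to T C^{1/α} e^{1/α} / (βp)^{1/α} = 2 (e/p)^{1/α}. -/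
open Set Filter

/-- the explicit entropy-integral estimate for `σ h = C h ^ α` on `[0,T]`,
and the limit of the bound as the auxiliary exponent `α̃` tends to `0+`. -/
theorem entropy_integral_estimate (C T α p : ℝ) (hC : 0 < C) (hT : 0 < T)
    (hα : α ∈ Set.Ioo (0 : ℝ) 1) (hp : p ∈ Set.Ioo (0 : ℝ) 1)
    (σinv : ℝ → ℝ) (hσinv : σinv = fun u => (u / C) ^ (1 / α))
    (β : ℝ) (hβ : β = C * (T / 2) ^ α) :
    (∀ αt ∈ Set.Ioo (0 : ℝ) α,
      ((1 / (β * p)) * ∫ u in (0 : ℝ)..(β * p), (T / σinv u) ^ αt) ^ (1 / αt)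
        ≤ T * C ^ (1 / α) / ((β * p) ^ (1 / α) * (1 - αt / α) ^ (1 / αt))) ∧
    Tendsto (fun αt : ℝ => T * C ^ (1 / α) / ((β * p) ^ (1 / α) * (1 - αt / α) ^ (1 / αt)))
      (nhdsWithin 0 (Set.Ioi 0))
      (nhds (T * C ^ (1 / α) * Real.exp 1 ^ (1 / α) / (β * p) ^ (1 / α))) ∧
    T * C ^ (1 / α) * Real.exp 1 ^ (1 / α) / (β * p) ^ (1 / α)
      = 2 * (Real.exp 1 / p) ^ (1 / α) := by
  obtain ⟨hα0, hα1⟩ := hα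
  obtain ⟨hp0, hp1⟩ := hp
  have hβ0 : 0 < β := by rw [hβ]; positivity
  have hβp : 0 < β * p := mul_pos hβ0 hp0
  have hA : 0 < T * C ^ (1 / α) := by positivity
  refine ⟨?_, ?_, ?_⟩
  · rintro αt ⟨hαt0, hαtα⟩
    have hαtne : αt ≠ 0 := hαt0.ne'
    have h1 : 0 < 1 - αt / α := by
      have : αt / α < 1 := (div_lt_one hα0).mpr hαtα
      linarith
    have hint : ∫ u in (0 : ℝ)..(β * p), (T / σinv u) ^ αt
        = ∫ u in (0 : ℝ)..(β * p), (T * C ^ (1 / α)) ^ αt * u ^ (-(αt / α)) := by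
      apply intervalIntegral.integral_congr
      intro u hu
      rw [Set.uIcc_of_le hβp.le] at hu
      rcases eq_or_lt_of_le hu.1 with h0 | h0
      · rw [← h0]
        simp only [hσinv]
        rw [zero_div, Real.zero_rpow (one_div_ne_zero hα0.ne'), div_zero,
          Real.zero_rpow hαtne,
          Real.zero_rpow (neg_ne_zero.mpr (div_ne_zero hαtne hα0.ne')), mul_zero]
      · have hu0 : 0 < u := h0
        have hbase : T / σinv u = T * C ^ (1 / α) * u ^ (-(1 / α)) := by
          rw [hσinv]
          simp only
          rw [Real.div_rpow hu0.le hC.le, Real.rpow_neg hu0.le]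
          field_simp
        show (T / σinv u) ^ αt = (T * C ^ (1 / α)) ^ αt * u ^ (-(αt / α))
        rw [hbase, Real.mul_rpow (by positivity) (by positivity),
          ← Real.rpow_mul hu0.le]
        congr 1
        ring
    rw [hint, intervalIntegral.integral_const_mul,
      integral_rpow (Or.inl (by linarith [div_pos hαt0 hα0] : (-1:ℝ) < -(αt/α)))]
    have he : -(αt / α) + 1 = 1 - αt / α := by ring
    rw [he, Real.zero_rpow h1.ne']
    -- now show equality with RHS
    set R : ℝ := T * C ^ (1 / α) / ((β * p) ^ (1 / α) * (1 - αt / α) ^ (1 / αt)) with hR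
    have hRpos : 0 < R := by rw [hR]; positivity
    have hx : 1 / (β * p) * ((T * C ^ (1 / α)) ^ αt * (((β * p) ^ (1 - αt / α) - 0) / (1 - αt / α)))
        = R ^ αt := by
      rw [hR, Real.div_rpow hA.le (by positivity),
        Real.mul_rpow (show (0:ℝ) ≤ (β * p) ^ (1 / α) by positivity)
          (show (0:ℝ) ≤ (1 - αt / α) ^ (1 / αt) by positivity),
        ← Real.rpow_mul hβp.le, ← Real.rpow_mul h1.le,
        one_div_mul_cancel hαtne, Real.rpow_one]
      have hsplit : (β * p) ^ (1 - αt / α) = (β * p) / (β * p) ^ (1 / α * αt) := by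
        rw [show (1:ℝ) - αt / α = 1 - 1 / α * αt by ring, Real.rpow_sub hβp, Real.rpow_one]
      have hne1 : ((β * p) ^ (1 / α * αt)) ≠ 0 := by positivity
      have hne2 : (1 - αt / α) ≠ 0 := h1.ne'
      rw [hsplit, sub_zero, div_div]
      set M := (β * p) ^ (1 / α * αt) * (1 - αt / α) with hM
      have hMne : M ≠ 0 := mul_ne_zero hne1 hne2
      have hβpne : β * p ≠ 0 := hβp.ne'
      field_simp
    rw [hx, ← Real.rpow_mul hRpos.le, mul_one_div_cancel hαtne, Real.rpow_one]
  · have hg : Tendsto (fun t : ℝ => (1 - t / α) ^ (1 / t))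
        (nhdsWithin 0 (Set.Ioi 0)) (nhds (Real.exp (-(1 / α)))) := by
      have h1 := (Real.tendsto_one_add_div_rpow_exp (-(1 / α))).comp tendsto_inv_nhdsGT_zero
      refine h1.congr' ?_
      filter_upwards [self_mem_nhdsWithin] with t ht
      have ht0 : (0:ℝ) < t := ht
      simp only [Function.comp]
      rw [show 1 + -(1 / α) / t⁻¹ = 1 - t / α by field_simp; ring, inv_eq_one_div]
    have hBpos : 0 < (β * p) ^ (1 / α) := by positivity
    have hne : (β * p) ^ (1 / α) * Real.exp (-(1 / α)) ≠ 0 := by positivity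
    have := Tendsto.div (tendsto_const_nhds (α := ℝ) (x := T * C ^ (1 / α)))
      (Tendsto.mul (tendsto_const_nhds (x := (β * p) ^ (1 / α))) hg) hne
    have hval : T * C ^ (1 / α) * Real.exp 1 ^ (1 / α) / (β * p) ^ (1 / α)
        = T * C ^ (1 / α) / ((β * p) ^ (1 / α) * Real.exp (-(1 / α))) := by
      rw [Real.exp_neg, Real.exp_one_rpow]
      have he : (0:ℝ) < Real.exp (1 / α) := Real.exp_pos _
      field_simp
    rw [hval]
    exact this
  · have hBp : (β * p) ^ (1 / α) = C ^ (1 / α) * (T / 2) * p ^ (1 / α) := by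
      rw [hβ, Real.mul_rpow (by positivity) hp0.le,
        Real.mul_rpow hC.le (by positivity), ← Real.rpow_mul (by positivity),
        mul_one_div_cancel hα0.ne', Real.rpow_one]
    rw [hBp, Real.div_rpow (Real.exp_pos 1).le hp0.le]
    have h1 : (0:ℝ) < C ^ (1 / α) := by positivity
    have h2 : (0:ℝ) < p ^ (1 / α) := by positivity
    field_simp
end
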